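/- Let H be a finite group and S ⊆ H. Then Aut(Cay(H,S)) = Aut(⟨⟨S⟩⟩), where ⟨⟨S⟩⟩ denotes the smallest S-ring over H containing the simple quantity of S. -/

import Mathlib

open scoped Classical Pointwise

noncomputable section

variable {H : Type*}

/-- The simple quantity of a subset `T` of `H` in the group algebra `ℚ H`. -/
def simpleQ [Group H] [Fintype H] (T : Set H) : MonoidAlgebra ℚ H :=
  ∑ h ∈ T.toFinset, MonoidAlgebra.single h (1 : ℚ)

/-- An S-ring over a finite group `H`: a partition of `H` containing `{1}`,
closed under inversion, whose simple quantities span a subalgebra of `ℚ H`. -/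
structure SRing (H : Type*) [Group H] [Fintype H] where
  basicSets : Set (Set H)
  exists_unique_mem : ∀ h : H, ∃! T, T ∈ basicSets ∧ h ∈ T
  nonempty_of_mem : ∀ T ∈ basicSets, T.Nonempty
  one_mem : ({1} : Set H) ∈ basicSets
  inv_mem : ∀ T ∈ basicSets, T⁻¹ ∈ basicSets
  mul_mem : ∀ T ∈ basicSets, ∀ S ∈ basicSets,
    simpleQ T * simpleQ S ∈ Submodule.span ℚ (simpleQ '' basicSets)

namespace SRing

variable [Group H] [Fintype H]

/-- The underlying ℚ-subspace of the S-ring. -/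
def carrier (A : SRing H) : Submodule ℚ (MonoidAlgebra ℚ H) :=
  Submodule.span ℚ (simpleQ '' A.basicSets)

/-- `S` is an `𝒜`-subset: its simple quantity lies in `𝒜`. -/
def IsSubset (A : SRing H) (S : Set H) : Prop := simpleQ S ∈ A.carrier

/-- The thin radical of the S-ring. -/
def thin (A : SRing H) : Set H := {g | ({g} : Set H) ∈ A.basicSets}

end SRing

/-- The radical of a subset `S`: elements `h` with `hS = Sh = S`. -/
def radSet [Group H] (S : Set H) : Set H := {h | {h} * S = S ∧ S * {h} = S}

/-- The automorphism group of the Cayley digraph `Cay(H, T)`. -/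
def cayAut [Group H] (T : Set H) : Subgroup (Equiv.Perm H) where
  carrier := {g | ∀ x y : H, y * x⁻¹ ∈ T ↔ g y * (g x)⁻¹ ∈ T}
  one_mem' := by intro x y; simp
  mul_mem' := by
    intro a b ha hb x y
    simpa [Equiv.Perm.mul_apply] using (hb x y).trans (ha (b x) (b y))
  inv_mem' := by
    intro a ha x y
    simpa using (ha (a⁻¹ x) (a⁻¹ y)).symm

/-- The automorphism group of an S-ring. -/
def SRing.aut [Group H] [Fintype H] (A : SRing H) : Subgroup (Equiv.Perm H) :=
  ⨅ T ∈ A.basicSets, cayAut T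

/-- The right regular representation of `H` inside `Sym(H)`. -/
def rightRegular (H : Type*) [Group H] : Subgroup (Equiv.Perm H) where
  carrier := Set.range fun h : H => Equiv.mulRight h
  one_mem' := ⟨1, by ext x; simp⟩
  mul_mem' := by
    rintro _ _ ⟨a, rfl⟩ ⟨b, rfl⟩
    exact ⟨b * a, by ext x; simp [mul_assoc]⟩
  inv_mem' := by
    rintro _ ⟨a, rfl⟩
    exact ⟨a⁻¹, by ext x; simp⟩

/-- The orbit of `h` under the stabilizer of the identity in `G ≤ Sym(H)`. -/
def orbitOfStab [Group H] (G : Subgroup (Equiv.Perm H)) (h : H) : Set H :=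
  {x | ∃ g ∈ G, g 1 = 1 ∧ g h = x}

/-- A Schurian S-ring: its basic sets are the orbits of the identity-stabilizer
of some overgroup of the right regular representation. -/
def SRing.IsSchurian [Group H] [Fintype H] (A : SRing H) : Prop :=
  ∃ G : Subgroup (Equiv.Perm H), rightRegular H ≤ G ∧
    A.basicSets = {S | ∃ h : H, S = orbitOfStab G h}

/-- A p-S-ring: all basic sets have `p`-power size. -/
def SRing.IsPSRing [Group H] [Fintype H] (A : SRing H) (p : ℕ) : Prop :=
  ∀ T ∈ A.basicSets, ∃ k : ℕ, Nat.card T = p ^ k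

/-- A decomposable S-ring: a nontrivial `E/F`-wreath product. -/
def SRing.Decomposable [Group H] [Fintype H] (A : SRing H) : Prop :=
  ∃ E F : Subgroup H, F.Normal ∧ F ≤ E ∧ E ≠ ⊤ ∧ F ≠ ⊥ ∧
    A.IsSubset ↑E ∧ A.IsSubset ↑F ∧
    ∀ T ∈ A.basicSets, T ⊆ ((E : Set H))ᶜ → (F : Set H) ⊆ radSet T

/-- The 2-closure of a permutation group `G ≤ Sym(Ω)`: all permutations
preserving every `G`-orbit on `Ω × Ω`. -/
def twoClosure {Ω : Type*} (G : Subgroup (Equiv.Perm Ω)) : Subgroup (Equiv.Perm Ω) where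
  carrier := {γ | ∀ a b : Ω, ∃ g ∈ G, g a = γ a ∧ g b = γ b}
  one_mem' := fun a b => ⟨1, G.one_mem, rfl, rfl⟩
  mul_mem' := by
    intro γ δ hγ hδ a b
    obtain ⟨g, hg, hga, hgb⟩ := hδ a b
    obtain ⟨g', hg', hg'a, hg'b⟩ := hγ (δ a) (δ b)
    exact ⟨g' * g, G.mul_mem hg' hg, by simp [Equiv.Perm.mul_apply, hga, hg'a],
      by simp [Equiv.Perm.mul_apply, hgb, hg'b]⟩
  inv_mem' := by
    intro γ hγ a b
    obtain ⟨g, hg, hga, hgb⟩ := hγ (γ⁻¹ a) (γ⁻¹ b)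
    have h1 : g (γ⁻¹ a) = a := by rw [hga]; show (γ * γ⁻¹) a = a; rw [mul_inv_cancel, Equiv.Perm.one_apply]
    have h2 : g (γ⁻¹ b) = b := by rw [hgb]; show (γ * γ⁻¹) b = b; rw [mul_inv_cancel, Equiv.Perm.one_apply]
    refine ⟨g⁻¹, G.inv_mem hg, ?_, ?_⟩
    · exact g.injective (by show (g * g⁻¹) a = g (γ⁻¹ a); rw [mul_inv_cancel, Equiv.Perm.one_apply, h1])
    · exact g.injective (by show (g * g⁻¹) b = g (γ⁻¹ b); rw [mul_inv_cancel, Equiv.Perm.one_apply, h2])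

/-!
An S-ring is encoded by the equivalence relation `A.setoid` of lying in a common basic set; its
subspace is then the set of elements of `ℚ H` whose coefficients are constant on classes. The join
of the relations of all S-rings containing `S` thus yields an S-ring whose subspace is the
intersection of theirs: this is `⟨⟨S⟩⟩`.

As `S` is a union of basic sets of `⟨⟨S⟩⟩`, `Aut(⟨⟨S⟩⟩) ≤ Aut(Cay(H, S))`. Conversely,
`G = Aut(Cay(H, S))` contains the right regular representation, so the orbits of the stabiliser
`G₁` of `1` form a (Schurian) S-ring containing `S`, hence containing `⟨⟨S⟩⟩`. Every `γ ∈ G` keeps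
`y x⁻¹` and `γ y (γ x)⁻¹` in the same `G₁`-orbit, so it preserves `Cay(H, T)` for every basic set
`T` of `⟨⟨S⟩⟩`.
-/

def classConstant (r : Setoid H) : Submodule ℚ (MonoidAlgebra ℚ H) where
  carrier := {f | r ≤ Setoid.ker f.coeff}
  add_mem' hf hg _ _ hab := by
    simp [Setoid.ker_def.mp (hf hab), Setoid.ker_def.mp (hg hab)]
  zero_mem' _ _ _ := rfl
  smul_mem' c _ hf _ _ hab := by simp [Setoid.ker_def.mp (hf hab)]

theorem mem_classConstant {r : Setoid H} {f : MonoidAlgebra ℚ H} :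
    f ∈ classConstant r ↔ r ≤ Setoid.ker f.coeff :=
  Iff.rfl

section Group

variable [Group H]

def stabOrbitSetoid (G : Subgroup (Equiv.Perm H)) : Setoid H where
  r a b := ∃ γ ∈ G, γ 1 = 1 ∧ γ a = b
  iseqv.refl _ := ⟨1, G.one_mem, rfl, rfl⟩
  iseqv.symm := by
    rintro _ _ ⟨γ, hγ, h1, rfl⟩
    exact ⟨γ⁻¹, G.inv_mem hγ, Equiv.Perm.inv_eq_iff_eq.mpr h1.symm, by simp⟩
  iseqv.trans := by
    rintro _ _ _ ⟨γ, hγ, h1, rfl⟩ ⟨δ, hδ, h1', rfl⟩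
    exact ⟨δ * γ, G.mul_mem hδ hγ, by simp [h1, h1'], rfl⟩

variable {G : Subgroup (Equiv.Perm H)}

theorem stabOrbitSetoid_mul_inv (hG : rightRegular H ≤ G) {γ : Equiv.Perm H} (hγ : γ ∈ G)
    (x y : H) : stabOrbitSetoid G (y * x⁻¹) (γ y * (γ x)⁻¹) :=
  ⟨Equiv.mulRight (γ x)⁻¹ * γ * Equiv.mulRight x,
    G.mul_mem (G.mul_mem (hG ⟨_, rfl⟩) hγ) (hG ⟨_, rfl⟩), by simp, by simp⟩

theorem stabOrbitSetoid_inv (hG : rightRegular H ≤ G) {a b : H} (hab : stabOrbitSetoid G a b) :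
    stabOrbitSetoid G a⁻¹ b⁻¹ := by
  obtain ⟨γ, hγ, h1, rfl⟩ := hab
  simpa [h1] using stabOrbitSetoid_mul_inv hG hγ a 1

theorem rightRegular_le_cayAut (S : Set H) : rightRegular H ≤ cayAut S := by
  rintro _ ⟨a, rfl⟩ x y
  simp [mul_assoc]

end Group

section SRingTheory

variable [Group H] [Fintype H]

theorem coeff_simpleQ (T : Set H) (x : H) :
    (simpleQ T).coeff x = if x ∈ T then 1 else 0 := by
  simp [simpleQ, MonoidAlgebra.coeff_single, Finsupp.single_apply]

theorem coeff_simpleQ_eq_iff {T : Set H} {a b : H} :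
    (simpleQ T).coeff a = (simpleQ T).coeff b ↔ (a ∈ T ↔ b ∈ T) := by
  simp only [coeff_simpleQ]
  split_ifs <;> simp_all

theorem simpleQ_mem_classConstant_iff {r : Setoid H} {T : Set H} :
    simpleQ T ∈ classConstant r ↔ ∀ a b, r a b → (a ∈ T ↔ b ∈ T) :=
  forall₂_congr fun _ _ => imp_congr_right fun _ => coeff_simpleQ_eq_iff

theorem span_simpleQ_classes (r : Setoid H) :
    Submodule.span ℚ (simpleQ '' r.classes) = classConstant r := by
  refine le_antisymm (Submodule.span_le.mpr ?_) fun f hf => ?_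
  · rintro _ ⟨_, ⟨y, rfl⟩, rfl⟩
    exact simpleQ_mem_classConstant_iff.mpr fun a b hab =>
      ⟨r.trans (r.symm hab), r.trans hab⟩
  · have hf_eq : f = ∑ q : Quotient r, f.coeff q.out • simpleQ {x | r x q.out} := by
      ext x
      simp only [MonoidAlgebra.coeff_sum, MonoidAlgebra.coeff_smul, Finsupp.finsetSum_apply,
        Finsupp.smul_apply, coeff_simpleQ, Set.mem_ofPred_eq, smul_eq_mul, mul_ite, mul_one,
        mul_zero, ← Quotient.eq, Quotient.out_eq, Finset.sum_ite_eq, Finset.mem_univ, if_true]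
      exact hf (r.symm (Quotient.mk_out x))
    rw [hf_eq]
    exact Submodule.sum_mem _ fun q _ => Submodule.smul_mem _ _
      (Submodule.subset_span ⟨_, r.mem_classes q.out, rfl⟩)

namespace SRing

variable (A : SRing H) {B : SRing H}

def setoid : Setoid H := Setoid.mkClasses A.basicSets A.exists_unique_mem

theorem classes_setoid : A.setoid.classes = A.basicSets :=
  Setoid.classes_mkClasses _
    ⟨fun h => (A.nonempty_of_mem _ h).ne_empty rfl, A.exists_unique_mem⟩

theorem carrier_eq_classConstant : A.carrier = classConstant A.setoid := by
  rw [carrier, ← span_simpleQ_classes, classes_setoid]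

theorem simpleQ_mem_carrier {T : Set H} (hT : T ∈ A.basicSets) : simpleQ T ∈ A.carrier :=
  Submodule.subset_span ⟨T, hT, rfl⟩

theorem mul_mem_carrier {f g : MonoidAlgebra ℚ H} (hf : f ∈ A.carrier) (hg : g ∈ A.carrier) :
    f * g ∈ A.carrier := by
  have hmul : A.carrier * A.carrier ≤ A.carrier := by
    rw [carrier, Submodule.span_mul_span, Submodule.span_le]
    rintro _ ⟨_, ⟨T, hT, rfl⟩, _, ⟨U, hU, rfl⟩, rfl⟩
    exact A.mul_mem T hT U hU
  exact hmul (Submodule.mul_mem_mul hf hg)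

theorem setoid_inv {a b : H} (hab : A.setoid a b) : A.setoid a⁻¹ b⁻¹ := fun T hT ha => by
  simpa using hab T⁻¹ (A.inv_mem T hT) (by simpa using ha)

theorem setoid_le_of_carrier_le (h : A.carrier ≤ B.carrier) : B.setoid ≤ A.setoid :=
  fun _ _ hab _ hT ha => (simpleQ_mem_classConstant_iff.mp
    (B.carrier_eq_classConstant ▸ h (A.simpleQ_mem_carrier hT)) _ _ hab).mp ha

theorem mem_aut_iff {γ : Equiv.Perm H} :
    γ ∈ A.aut ↔ ∀ x y, A.setoid (y * x⁻¹) (γ y * (γ x)⁻¹) := by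
  simp only [aut, Subgroup.mem_iInf]
  exact ⟨fun h x y T hT hyx => (h T hT x y).mp hyx,
    fun h T hT x y => ⟨h x y T hT, A.setoid.symm (h x y) T hT⟩⟩

theorem aut_le_aut_of_carrier_le (h : A.carrier ≤ B.carrier) : B.aut ≤ A.aut := fun _ hγ =>
  A.mem_aut_iff.mpr fun x y => setoid_le_of_carrier_le A h (B.mem_aut_iff.mp hγ x y)

theorem aut_le_cayAut {T : Set H} (hT : A.IsSubset T) : A.aut ≤ cayAut T := fun _ hγ x y =>
  simpleQ_mem_classConstant_iff.mp (A.carrier_eq_classConstant ▸ hT) _ _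
    (A.mem_aut_iff.mp hγ x y)

def ofSetoid (r : Setoid H) (one : ∀ x, r x 1 → x = 1) (inv : ∀ a b, r a b → r a⁻¹ b⁻¹)
    (mul : ∀ f ∈ classConstant r, ∀ g ∈ classConstant r, f * g ∈ classConstant r) :
    SRing H where
  basicSets := r.classes
  exists_unique_mem := (Setoid.isPartition_classes r).2
  nonempty_of_mem _ := Setoid.nonempty_of_mem_partition (Setoid.isPartition_classes r)
  one_mem := ⟨1, Set.ext fun x => ⟨fun hx => hx ▸ r.refl 1, one x⟩⟩
  inv_mem := by
    rintro _ ⟨y, rfl⟩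
    exact ⟨y⁻¹, Set.ext fun x =>
      ⟨fun hx => by simpa using inv _ _ hx, fun hx => by simpa using inv _ _ hx⟩⟩
  mul_mem T hT U hU := by
    have hsimpleQ {V : Set H} (hV : V ∈ r.classes) : simpleQ V ∈ classConstant r :=
      span_simpleQ_classes r ▸ Submodule.subset_span ⟨V, hV, rfl⟩
    exact span_simpleQ_classes r ▸ mul _ (hsimpleQ hT) _ (hsimpleQ hU)

@[simp]
theorem setoid_ofSetoid (r : Setoid H) (one inv mul) : (ofSetoid r one inv mul).setoid = r :=
  Setoid.mkClasses_classes r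

theorem classConstant_iSup_setoid (𝒞 : Set (SRing H)) :
    classConstant (⨆ C ∈ 𝒞, C.setoid) = ⨅ C ∈ 𝒞, C.carrier := by
  ext f
  simp only [Submodule.mem_iInf, carrier_eq_classConstant, mem_classConstant, iSup₂_le_iff]

def sInf (𝒞 : Set (SRing H)) : SRing H :=
  ofSetoid (⨆ C ∈ 𝒞, C.setoid)
    (fun x hx => by
      have h1 : simpleQ {1} ∈ classConstant (⨆ C ∈ 𝒞, C.setoid) := by
        simp only [classConstant_iSup_setoid, Submodule.mem_iInf]
        exact fun C _ => C.simpleQ_mem_carrier C.one_mem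
      simpa using simpleQ_mem_classConstant_iff.mp h1 x 1 hx)
    (fun _ _ hab =>
      (iSup₂_le (a := Setoid.comap (·⁻¹) (⨆ C ∈ 𝒞, C.setoid)) fun C hC _ _ h =>
        le_iSup₂ (f := fun C (_ : C ∈ 𝒞) => C.setoid) C hC (C.setoid_inv h)) hab)
    (fun f hf g hg => by
      simp only [classConstant_iSup_setoid, Submodule.mem_iInf] at *
      exact fun C hC => C.mul_mem_carrier (hf C hC) (hg C hC))

theorem carrier_sInf (𝒞 : Set (SRing H)) : (sInf 𝒞).carrier = ⨅ C ∈ 𝒞, C.carrier := by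
  rw [carrier_eq_classConstant, sInf, setoid_ofSetoid, classConstant_iSup_setoid]

def schurian (G : Subgroup (Equiv.Perm H)) (hG : rightRegular H ≤ G) : SRing H :=
  ofSetoid (stabOrbitSetoid G)
    (fun _ ⟨γ, _, h1, hx⟩ => γ.injective (hx.trans h1.symm))
    (fun _ _ => stabOrbitSetoid_inv hG)
    (fun f hf g hg => by
      rintro a _ ⟨γ, hγ, h1, rfl⟩
      rw [Setoid.ker_def, MonoidAlgebra.coeff_mul_apply_right,
        MonoidAlgebra.coeff_mul_apply_right, Finsupp.sum_fintype _ _ (by simp),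
        Finsupp.sum_fintype _ _ (by simp), eq_comm, ← Equiv.sum_comp γ]
      refine Finset.sum_congr rfl fun v _ => ?_
      rw [← hf (stabOrbitSetoid_mul_inv hG hγ v a), ← hg ⟨γ, hγ, h1, rfl⟩])

variable {G : Subgroup (Equiv.Perm H)} (hG : rightRegular H ≤ G)

theorem setoid_schurian : (schurian G hG).setoid = stabOrbitSetoid G :=
  setoid_ofSetoid ..

theorem le_aut_schurian : G ≤ (schurian G hG).aut := fun _ hγ =>
  mem_aut_iff _ |>.mpr fun x y => setoid_schurian hG ▸ stabOrbitSetoid_mul_inv hG hγ x y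

theorem isSubset_schurian_cayAut (S : Set H) :
    (schurian (cayAut S) (rightRegular_le_cayAut S)).IsSubset S := by
  rw [IsSubset, carrier_eq_classConstant, setoid_schurian, simpleQ_mem_classConstant_iff]
  rintro a _ ⟨γ, hγ, h1, rfl⟩
  simpa [h1] using hγ 1 a

end SRing

end SRingTheory

/-- the smallest S-ring containing `S` exists, and its
automorphism group is `Aut(Cay(H,S))`. -/
theorem stmt14 {H : Type*} [Group H] [Fintype H] (S : Set H) :
    (∃ B : SRing H, B.IsSubset S ∧
      ∀ C : SRing H, C.IsSubset S → B.carrier ≤ C.carrier) ∧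
    ∀ B : SRing H, B.IsSubset S →
      (∀ C : SRing H, C.IsSubset S → B.carrier ≤ C.carrier) →
      cayAut S = B.aut := by
  refine ⟨⟨SRing.sInf {C | C.IsSubset S}, ?_, fun C hC => ?_⟩, fun B hBS hBmin => ?_⟩
  · simp only [SRing.IsSubset, SRing.carrier_sInf, Submodule.mem_iInf]
    exact fun _ hC => hC
  · exact (SRing.carrier_sInf _).le.trans (iInf₂_le C hC)
  · refine le_antisymm ?_ (B.aut_le_cayAut hBS)
    let A := SRing.schurian (cayAut S) (rightRegular_le_cayAut S)
    have hBA : B.carrier ≤ A.carrier := hBmin A (SRing.isSubset_schurian_cayAut S)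
    calc cayAut S ≤ A.aut := SRing.le_aut_schurian _
      _ ≤ B.aut := SRing.aut_le_aut_of_carrier_le B hBA

end
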